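/- Under the additive Gaussian measurement error model X* = X + ε with ε ~ N(0, Σ_ε) independent of (Y, X), the error-corrected distance covariance dcov*(Y, X*), defined by replacing the characteristic functions of X* and (Y, X*) with their error-corrected versions φ*_{X*} and φ*_{Y,X*} in the distance covariance integral, equals the ordinary distance covariance dcov(Y, X) based on the true covariates. -/

import Mathlib

open MeasureTheory ProbabilityTheory

/-- The constant `c_d = π^{(1+d)/2} / Γ((1+d)/2)` of Székely–Rizzo–Bakirov. -/
noncomputable def cConst (d : ℕ) : ℝ :=
  Real.pi ^ ((1 + (d : ℝ)) / 2) / Real.Gamma ((1 + (d : ℝ)) / 2)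

/-- Euclidean norm on `ℝ^d` (viewed as `Fin d → ℝ`). -/
noncomputable def eucNorm {d : ℕ} (s : Fin d → ℝ) : ℝ := Real.sqrt (∑ i, s i ^ 2)

/-- The weight `w(r,s) = (c_1 c_p ‖r‖^2 ‖s‖^{1+p})⁻¹` for `Y` real and `X ∈ ℝᵖ`. -/
noncomputable def dcWeight {p : ℕ} (r : ℝ) (s : Fin p → ℝ) : ℝ :=
  (cConst 1 * cConst p * |r| ^ 2 * eucNorm s ^ (1 + (p : ℝ)))⁻¹

/-- Marginal characteristic function of a real random variable. -/
noncomputable def phiR {Ω : Type*} [MeasureSpace Ω] (μ : Measure Ω) (Y : Ω → ℝ) (r : ℝ) : ℂ :=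
  ∫ ω, Complex.exp (Complex.I * ((r * Y ω : ℝ) : ℂ)) ∂μ

/-- Marginal characteristic function of a random vector in `ℝᵖ`. -/
noncomputable def phiV {Ω : Type*} [MeasureSpace Ω] (μ : Measure Ω) {p : ℕ}
    (X : Ω → Fin p → ℝ) (s : Fin p → ℝ) : ℂ :=
  ∫ ω, Complex.exp (Complex.I * ((∑ i, s i * X ω i : ℝ) : ℂ)) ∂μ

/-- Joint characteristic function of a real random variable and a random vector. -/
noncomputable def phiJ {Ω : Type*} [MeasureSpace Ω] (μ : Measure Ω) (Y : Ω → ℝ) {p : ℕ}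
    (X : Ω → Fin p → ℝ) (r : ℝ) (s : Fin p → ℝ) : ℂ :=
  ∫ ω, Complex.exp (Complex.I * ((r * Y ω + ∑ i, s i * X ω i : ℝ) : ℂ)) ∂μ

/-- Squared distance covariance `dcov²(Y, X)` of a real `Y` and a vector `X`. -/
noncomputable def dcov2 {Ω : Type*} [MeasureSpace Ω] (μ : Measure Ω) (Y : Ω → ℝ) {p : ℕ}
    (X : Ω → Fin p → ℝ) : ℝ :=
  ∫ r : ℝ, ∫ s : Fin p → ℝ,
    Norm.norm (phiJ μ Y X r s - phiR μ Y r * phiV μ X s) ^ 2 * dcWeight r s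

/-- Error-corrected squared distance covariance `dcov*²(Y, X*)`: the characteristic
functions of `X*` and `(Y, X*)` are replaced by their error-corrected versions
`φ*_{X*}(s) = φ_{X*}(s) exp((1/2) sᵀ Σ_ε s)` and
`φ*_{Y,X*}(r,s) = φ_{Y,X*}(r,s) exp((1/2) sᵀ Σ_ε s)`. -/
noncomputable def dcovStar2 {Ω : Type*} [MeasureSpace Ω] (μ : Measure Ω) (Y : Ω → ℝ) {p : ℕ}
    (Xstar : Ω → Fin p → ℝ) (Seps : Matrix (Fin p) (Fin p) ℝ) : ℝ :=
  ∫ r : ℝ, ∫ s : Fin p → ℝ,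
    Norm.norm
        (phiJ μ Y Xstar r s * Complex.exp ((1 / 2 : ℂ) * ((∑ i, ∑ j, s i * Seps i j * s j : ℝ) : ℂ))
          - phiR μ Y r *
            (phiV μ Xstar s *
              Complex.exp ((1 / 2 : ℂ) * ((∑ i, ∑ j, s i * Seps i j * s j : ℝ) : ℂ)))) ^ 2 *
      dcWeight r s

/-!
For fixed `(r, s)`, the phase `r Y + sᵀX*` is `(r Y + sᵀX) + sᵀε`, a sum of independent terms,
and `sᵀε ~ N(0, sᵀΣ_ε s)` has characteristic function `exp(-(1/2) sᵀΣ_ε s)` at `1`. Hence both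
`φ_{Y,X*}(r, s)` and `φ_{X*}(s)` are the true characteristic functions times that Gaussian factor,
which the correction `exp((1/2) sᵀΣ_ε s)` cancels exactly, so the two integrands coincide.
-/

open Complex
open scoped NNReal

section GaussianPhase

variable {Ω : Type*} {mΩ : MeasurableSpace Ω} {μ : Measure Ω}

lemma integral_cexp_I_mul_eq_charFun_map {Z : Ω → ℝ} (hZ : AEMeasurable Z μ) :
    ∫ ω, cexp (I * Z ω) ∂μ = charFun (μ.map Z) 1 := by
  rw [charFun_apply_real, integral_map hZ (by fun_prop)]
  simp [mul_comm]

lemma integral_cexp_I_mul_add_of_indep_gaussian [IsFiniteMeasure μ] {Z U : Ω → ℝ} {v : ℝ≥0}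
    (hZ : AEMeasurable Z μ) (hU : AEMeasurable U μ) (hZU : IndepFun Z U μ)
    (hUlaw : μ.map U = gaussianReal 0 v) :
    ∫ ω, cexp (I * (Z ω + U ω : ℝ)) ∂μ = (∫ ω, cexp (I * Z ω) ∂μ) * cexp (-(v : ℝ) / 2) := by
  rw [integral_cexp_I_mul_eq_charFun_map (Z := fun ω => Z ω + U ω) (hZ.add hU),
    integral_cexp_I_mul_eq_charFun_map hZ, hZU.charFun_map_fun_add_eq_mul hZ hU, Pi.mul_apply,
    hUlaw, charFun_gaussianReal]
  simp [neg_div]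

end GaussianPhase

lemma phiV_eq_phiJ_zero {Ω : Type*} [MeasureSpace Ω] (μ : Measure Ω) (Y : Ω → ℝ) {p : ℕ}
    (X : Ω → Fin p → ℝ) (s : Fin p → ℝ) : phiV μ X s = phiJ μ Y X 0 s := by
  simp [phiV, phiJ]

lemma phiJ_add_of_indep_gaussian {Ω : Type*} [MeasureSpace Ω] (μ : Measure Ω)
    [IsFiniteMeasure μ] {p : ℕ} {Y : Ω → ℝ} {X ε : Ω → Fin p → ℝ}
    (hY : Measurable Y) (hX : Measurable X) (hε : Measurable ε)
    (hindep : IndepFun ε (fun ω => (Y ω, X ω)) μ) (r : ℝ) (s : Fin p → ℝ) {v : ℝ≥0}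
    (hlaw : μ.map (fun ω => ∑ i, s i * ε ω i) = gaussianReal 0 v) :
    phiJ μ Y (fun ω => X ω + ε ω) r s = phiJ μ Y X r s * cexp (-(v : ℝ) / 2) := by
  have hphase : ∀ ω, r * Y ω + ∑ i, s i * (X ω + ε ω) i
      = (r * Y ω + ∑ i, s i * X ω i) + ∑ i, s i * ε ω i := fun ω => by
    simp only [Pi.add_apply, mul_add, Finset.sum_add_distrib]
    ring
  have hZU : IndepFun (fun ω => r * Y ω + ∑ i, s i * X ω i) (fun ω => ∑ i, s i * ε ω i) μ :=
    hindep.symm.comp (φ := fun q : ℝ × (Fin p → ℝ) => r * q.1 + ∑ i, s i * q.2 i)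
      (ψ := fun e : Fin p → ℝ => ∑ i, s i * e i) (by fun_prop) (by fun_prop)
  simp only [phiJ, hphase]
  exact integral_cexp_I_mul_add_of_indep_gaussian (by fun_prop) (by fun_prop) hZU hlaw

/-- Under the additive Gaussian measurement error model `X* = X + ε` with
`ε ~ N(0, Σ_ε)` (Cramér–Wold encoding) independent of the pair `(Y, X)`, the
error-corrected distance covariance of `(Y, X*)` equals the ordinary distance covariance
of `(Y, X)` based on the true covariates. -/
theorem dcovStar_eq_dcov
    {Ω : Type*} [MeasureSpace Ω] (μ : Measure Ω) [IsProbabilityMeasure μ]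
    {p : ℕ} (Y : Ω → ℝ) (X ε : Ω → Fin p → ℝ)
    (hY : Measurable Y) (hX : Measurable X) (hε : Measurable ε)
    (Seps : Matrix (Fin p) (Fin p) ℝ)
    (hSpsd : ∀ s : Fin p → ℝ, 0 ≤ ∑ i, ∑ j, s i * Seps i j * s j)
    (hGauss : ∀ s : Fin p → ℝ,
      Measure.map (fun ω => ∑ i, s i * ε ω i) μ =
        gaussianReal 0 (Real.toNNReal (∑ i, ∑ j, s i * Seps i j * s j)))
    (hindep : IndepFun ε (fun ω => (Y ω, X ω)) μ) :
    dcovStar2 μ Y (fun ω => X ω + ε ω) Seps = dcov2 μ Y X := by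
  unfold dcovStar2 dcov2
  congr 1 with r
  congr 1 with s
  have hcancel : cexp (-((∑ i, ∑ j, s i * Seps i j * s j).toNNReal : ℝ) / 2) *
      cexp ((1 / 2 : ℂ) * ((∑ i, ∑ j, s i * Seps i j * s j : ℝ) : ℂ)) = 1 := by
    rw [Real.coe_toNNReal _ (hSpsd s), ← Complex.exp_add]
    convert Complex.exp_zero using 2
    ring
  rw [phiV_eq_phiJ_zero μ Y, phiV_eq_phiJ_zero μ Y,
    phiJ_add_of_indep_gaussian μ hY hX hε hindep r s (hGauss s),
    phiJ_add_of_indep_gaussian μ hY hX hε hindep 0 s (hGauss s)]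
  congr 3
  linear_combination (phiJ μ Y X r s - phiR μ Y r * phiJ μ Y X 0 s) * hcancel
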